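/- Let θ_1, θ_2 : [1,∞) → [0,1] be nondecreasing functions with θ_1 ≤ θ_2 pointwise, and let S = {λ : θ_1(λ) < θ_2(λ)}. Then S ∩ ∂S is countable, where ∂S denotes the topological boundary of S in ℝ. -/
import Mathlib


open Set

theorem stmt_9 (θ1 θ2 : ℝ → ℝ)
    (h1 : MonotoneOn θ1 (Ici 1)) (h2 : MonotoneOn θ2 (Ici 1))
    (hr1 : ∀ x ∈ Ici (1 : ℝ), θ1 x ∈ Icc (0 : ℝ) 1)
    (hr2 : ∀ x ∈ Ici (1 : ℝ), θ2 x ∈ Icc (0 : ℝ) 1)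
    (hle : ∀ x ∈ Ici (1 : ℝ), θ1 x ≤ θ2 x)
    (S : Set ℝ) (hS : S = {l | l ∈ Ici (1 : ℝ) ∧ θ1 l < θ2 l}) :
    (S ∩ frontier S).Countable := by
  classical
  -- choice of a rational strictly between θ1 l and θ2 l
  set q : ℝ → ℚ := fun l => if h : θ1 l < θ2 l then (exists_rat_btwn h).choose else 0 with hq
  have hq1 : ∀ l, θ1 l < θ2 l → θ1 l < (q l : ℝ) := by
    intro l h
    simp only [hq, dif_pos h]
    exact (exists_rat_btwn h).choose_spec.1
  have hq2 : ∀ l, θ1 l < θ2 l → ((q l : ℝ)) < θ2 l := by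
    intro l h
    simp only [hq, dif_pos h]
    exact (exists_rat_btwn h).choose_spec.2
  -- key fact for points not in S
  have heq : ∀ μ, 1 ≤ μ → μ ∉ S → θ1 μ = θ2 μ := by
    intro μ hμ hns
    refine le_antisymm (hle μ hμ) ?_
    by_contra h
    exact hns (by rw [hS]; exact ⟨hμ, lt_of_not_ge h⟩)
  set A : Set ℝ := {l | l ∈ S ∧ ∀ ε > (0:ℝ), ∃ μ ∈ Ioo (l - ε) l, μ ∉ S} with hA
  set B : Set ℝ := {l | l ∈ S ∧ ∀ ε > (0:ℝ), ∃ μ ∈ Ioo l (l + ε), μ ∉ S} with hB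
  have hsub : S ∩ frontier S ⊆ A ∪ B := by
    rintro l ⟨hlS, hlF⟩
    by_contra hl
    rw [Set.mem_union, not_or] at hl
    obtain ⟨hlA, hlB⟩ := hl
    simp only [hA, mem_setOf_eq, not_and] at hlA
    simp only [hB, mem_setOf_eq, not_and] at hlB
    have hlA' := hlA hlS
    have hlB' := hlB hlS
    push_neg at hlA' hlB'
    obtain ⟨ε1, hε1, hL⟩ := hlA'
    obtain ⟨ε2, hε2, hR⟩ := hlB'
    have hopen : Ioo (l - ε1) (l + ε2) ⊆ S := by
      intro x hx
      rcases lt_trichotomy x l with h | h | h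
      · exact hL x ⟨hx.1, h⟩
      · exact h ▸ hlS
      · exact hR x ⟨h, hx.2⟩
    have : l ∈ interior S :=
      mem_interior.2 ⟨Ioo (l - ε1) (l + ε2), hopen, isOpen_Ioo,
        ⟨by linarith, by linarith⟩⟩
    exact (hlF.2 this)
  have hSmem : ∀ l ∈ S, 1 ≤ l ∧ θ1 l < θ2 l := by
    intro l hl; rw [hS] at hl; exact hl
  -- A is countable: q is strictly monotone on A
  have hAc : A.Countable := by
    have : StrictMonoOn q A := by
      intro x hx y hy hxy
      obtain ⟨hxS, _⟩ := hx
      obtain ⟨hyS, hyL⟩ := hy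
      obtain ⟨hx1, hxlt⟩ := hSmem x hxS
      obtain ⟨hy1, hylt⟩ := hSmem y hyS
      obtain ⟨μ, hμmem, hμns⟩ := hyL (y - x) (by linarith)
      have hμ1 : 1 ≤ μ := le_trans hx1 (le_of_lt (by simpa using hμmem.1))
      have hμeq := heq μ hμ1 hμns
      have h2 : θ2 x ≤ θ2 μ := h2 hx1 hμ1 (le_of_lt (by simpa using hμmem.1))
      have h1 : θ1 μ ≤ θ1 y := h1 hμ1 hy1 (le_of_lt hμmem.2)
      have : (q x : ℝ) < (q y : ℝ) := by
        calc (q x : ℝ) < θ2 x := hq2 x hxlt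
        _ ≤ θ1 y := by linarith
        _ < q y := hq1 y hylt
      exact_mod_cast this
    exact Set.countable_of_injective_of_countable_image this.injOn (Set.to_countable _)
  have hBc : B.Countable := by
    have : StrictMonoOn q B := by
      intro x hx y hy hxy
      obtain ⟨hxS, hxR⟩ := hx
      obtain ⟨hyS, _⟩ := hy
      obtain ⟨hx1, hxlt⟩ := hSmem x hxS
      obtain ⟨hy1, hylt⟩ := hSmem y hyS
      obtain ⟨μ, hμmem, hμns⟩ := hxR (y - x) (by linarith)
      have hμx : x < μ := hμmem.1
      have hμy : μ < y := by have := hμmem.2; linarith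
      have hμ1 : 1 ≤ μ := le_trans hx1 hμx.le
      have hμeq := heq μ hμ1 hμns
      have h2 : θ2 x ≤ θ2 μ := h2 hx1 hμ1 hμx.le
      have h1 : θ1 μ ≤ θ1 y := h1 hμ1 hy1 hμy.le
      have : (q x : ℝ) < (q y : ℝ) := by
        calc (q x : ℝ) < θ2 x := hq2 x hxlt
        _ ≤ θ1 y := by linarith
        _ < q y := hq1 y hylt
      exact_mod_cast this
    exact Set.countable_of_injective_of_countable_image this.injOn (Set.to_countable _)
  exact ((hAc.union hBc).mono hsub)
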